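/- arXiv:2010.11740 — 5 statements merged into one kernel-verified Lean document; each statement's English description precedes it below -/
import Mathlib

section
/- For every σ > 0 and every e ∈ ℝ, and for every s > 0, one has (e²/2)·s + σ²·(s·log s − s + 1) ≥ σ²·(1 − exp(−e²/(2σ²))), with equality if and only if s = exp(−e²/(2σ²)). In particular, for fixed e the augmented half-quadratic cost in s is minimized exactly at s = G_σ(e). -/
/-- Gaussian kernel `G_σ(e) = exp(−e²/(2σ²))`. -/
noncomputable def gaussKernel (σ e : ℝ) : ℝ := Real.exp (-(e ^ 2) / (2 * σ ^ 2))

/-- Half-quadratic potential `φ_σ(s) = σ²·(s·log s − s + 1)`. -/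
noncomputable def hqPotential (σ s : ℝ) : ℝ := σ ^ 2 * (s * Real.log s - s + 1)

/-!
Since `e²/2 = −σ² log G_σ(e)`, the gap between the half-quadratic cost and the Welsch loss is
`σ² (s log s − s log g − s + g)` with `g = G_σ(e)`, i.e. `σ² g · klFun (s / g)`, where
`klFun x = x log x + 1 − x` is the Kullback–Leibler integrand. It is nonnegative on `[0, ∞)` and
vanishes only at `1`, so the gap is nonnegative and vanishes exactly at `s = g`.
-/

open Real InformationTheory

lemma mul_log_sub_mul_log_sub_add_eq_mul_klFun_div (s : ℝ) {g : ℝ} (hg : g ≠ 0) :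
    s * log s - s * log g - s + g = g * klFun (s / g) := by
  rcases eq_or_ne s 0 with rfl | hs
  · simp [klFun_zero]
  · rw [klFun_apply, log_div hs hg]
    field_simp
    ring

lemma gaussKernel_pos (σ e : ℝ) : 0 < gaussKernel σ e := exp_pos _

lemma log_gaussKernel (σ e : ℝ) : log (gaussKernel σ e) = -(e ^ 2) / (2 * σ ^ 2) :=
  log_exp _

lemma half_sq_mul_add_hqPotential_sub_eq_mul_klFun {σ : ℝ} (hσ : σ ≠ 0) (e s : ℝ) :
    (e ^ 2 / 2) * s + hqPotential σ s - σ ^ 2 * (1 - gaussKernel σ e) =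
      σ ^ 2 * (gaussKernel σ e * klFun (s / gaussKernel σ e)) := by
  have half_sq : e ^ 2 / 2 = -σ ^ 2 * log (gaussKernel σ e) := by
    rw [log_gaussKernel]
    field_simp
  rw [← mul_log_sub_mul_log_sub_add_eq_mul_klFun_div s (gaussKernel_pos σ e).ne', half_sq,
    hqPotential]
  ring

/-- For every `σ > 0`, `e ∈ ℝ` and `s > 0`,
`(e²/2)·s + σ²·(s·log s − s + 1) ≥ σ²·(1 − exp(−e²/(2σ²)))`,
with equality iff `s = exp(−e²/(2σ²))`. -/
theorem hq_pointwise_lower_bound (σ e s : ℝ) (hσ : 0 < σ) (hs : 0 < s) :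
    σ ^ 2 * (1 - gaussKernel σ e) ≤ (e ^ 2 / 2) * s + hqPotential σ s ∧
    ((e ^ 2 / 2) * s + hqPotential σ s = σ ^ 2 * (1 - gaussKernel σ e) ↔
      s = gaussKernel σ e) := by
  have gap := half_sq_mul_add_hqPotential_sub_eq_mul_klFun hσ.ne' e s
  have hg := gaussKernel_pos σ e
  have hσ2 : 0 < σ ^ 2 := by positivity
  have hratio : 0 ≤ s / gaussKernel σ e := by positivity
  constructor
  · have : 0 ≤ σ ^ 2 * (gaussKernel σ e * klFun (s / gaussKernel σ e)) :=
      mul_nonneg hσ2.le (mul_nonneg hg.le (klFun_nonneg hratio))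
    linarith
  · rw [← sub_eq_zero, gap, mul_eq_zero, mul_eq_zero, klFun_eq_zero_iff hratio,
      div_eq_one_iff_eq hg.ne']
    simp [hσ2.ne', hg.ne']
end

section
/- For every σ > 0 and every e ∈ ℝ, the infimum over s ∈ (0, ∞) of (e²/2)·s + σ²·(s·log s − s + 1) equals σ²·(1 − exp(−e²/(2σ²))), i.e., the Welsch loss admits the half-quadratic representation σ²(1 − G_σ(e)) = min_{s>0} ((e²/2)·s + φ_σ(s)). -/
open Real Set

lemma one_sub_exp_neg_le_mul_add_mul_log (t : ℝ) {s : ℝ} (hs : 0 < s) :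
    1 - exp (-t) ≤ t * s + (s * log s - s + 1) := by
  have hlog : log (exp (-t) / s) ≤ exp (-t) / s - 1 := log_le_sub_one_of_pos (by positivity)
  rw [log_div (exp_pos _).ne' hs.ne', log_exp] at hlog
  have := mul_le_mul_of_nonneg_left hlog hs.le
  rw [mul_sub, mul_sub, mul_div_cancel₀ _ hs.ne'] at this
  linarith

lemma mul_add_mul_log_at_exp_neg (t : ℝ) :
    t * exp (-t) + (exp (-t) * log (exp (-t)) - exp (-t) + 1) = 1 - exp (-t) := by
  rw [log_exp]
  ring

lemma isLeast_mul_add_mul_log (t : ℝ) :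
    IsLeast ((fun s => t * s + (s * log s - s + 1)) '' Ioi 0) (1 - exp (-t)) :=
  ⟨⟨exp (-t), exp_pos _, mul_add_mul_log_at_exp_neg t⟩, by
    rintro _ ⟨s, hs, rfl⟩
    exact one_sub_exp_neg_le_mul_add_mul_log t hs⟩

/-- Half-quadratic representation of the Welsch loss:
`σ²(1 − G_σ(e)) = inf_{s > 0} ((e²/2)·s + φ_σ(s))`. -/
theorem hq_representation (σ e : ℝ) (hσ : 0 < σ) :
    sInf ((fun s : ℝ => (e ^ 2 / 2) * s + hqPotential σ s) '' Set.Ioi (0 : ℝ)) =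
      σ ^ 2 * (1 - gaussKernel σ e) := by
  set t := e ^ 2 / (2 * σ ^ 2)
  have hobjective : (fun s : ℝ => (e ^ 2 / 2) * s + hqPotential σ s) =
      fun s => σ ^ 2 * (t * s + (s * log s - s + 1)) := by
    funext s
    simp only [hqPotential, t]
    field_simp [hσ.ne']
  have hkernel : gaussKernel σ e = exp (-t) := by
    rw [gaussKernel, neg_div]
  have hscale : Monotone fun x : ℝ => σ ^ 2 * x := fun _ _ h =>
    mul_le_mul_of_nonneg_left h (sq_nonneg σ)
  rw [hobjective, hkernel, ← image_image (fun x => σ ^ 2 * x)]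
  exact (hscale.map_isLeast (isLeast_mul_add_mul_log t)).csInf_eq
end

section
/- Let ι be a finite type, σ > 0, and e : ι → ℝ. For every weight vector s : ι → ℝ with s i > 0 for all i, one has Σᵢ [ (e i)²·(s i)/2 + σ²·((s i)·log(s i) − s i + 1) ] ≥ Σᵢ σ²·(1 − exp(−(e i)²/(2σ²))), with equality if and only if s i = exp(−(e i)²/(2σ²)) for every i. Hence, for fixed residuals, the half-quadratic augmented cost over the weight tensor is minimized exactly at the Gaussian-kernel weights W_i = G_σ(e i). -/
/-!
The half-quadratic cost `e² s / 2 + φ_σ(s)` exceeds the Welsch loss by exactly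
`σ² G · klFun (s / G)`, where `G = G_σ(e)` and `klFun x = x log x + 1 - x` is the
Kullback–Leibler generator. Since `klFun ≥ 0` on `[0, ∞)` with `klFun x = 0` only at `x = 1`,
each summand is bounded below by its Welsch loss, with equality exactly at `s = G`.
-/

open Finset

open InformationTheory

noncomputable def welschLoss (σ e : ℝ) : ℝ := σ ^ 2 * (1 - gaussKernel σ e)

noncomputable def hqCost (σ e s : ℝ) : ℝ := e ^ 2 * s / 2 + σ ^ 2 * (s * Real.log s - s + 1)

lemma hqCost_sub_welschLoss {σ : ℝ} (hσ : σ ≠ 0) (e s : ℝ) :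
    hqCost σ e s - welschLoss σ e = σ ^ 2 * gaussKernel σ e * klFun (s / gaussKernel σ e) := by
  have hG : gaussKernel σ e ≠ 0 := (Real.exp_pos _).ne'
  rcases eq_or_ne s 0 with rfl | hs
  · simp only [hqCost, welschLoss, klFun_zero, zero_div]
    ring
  rw [klFun_apply, Real.log_div hs hG, gaussKernel, Real.log_exp, hqCost, welschLoss, gaussKernel]
  field_simp
  ring

lemma welschLoss_le_hqCost {σ : ℝ} (hσ : σ ≠ 0) (e : ℝ) {s : ℝ} (hs : 0 ≤ s) :
    welschLoss σ e ≤ hqCost σ e s := by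
  have hG : 0 < gaussKernel σ e := Real.exp_pos _
  have hkl : 0 ≤ klFun (s / gaussKernel σ e) := klFun_nonneg (div_nonneg hs hG.le)
  have hgap := hqCost_sub_welschLoss hσ e s
  have : 0 ≤ σ ^ 2 * gaussKernel σ e * klFun (s / gaussKernel σ e) := by positivity
  linarith

lemma hqCost_eq_welschLoss_iff {σ : ℝ} (hσ : σ ≠ 0) (e : ℝ) {s : ℝ} (hs : 0 ≤ s) :
    hqCost σ e s = welschLoss σ e ↔ s = gaussKernel σ e := by
  have hG : 0 < gaussKernel σ e := Real.exp_pos _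
  rw [← sub_eq_zero, hqCost_sub_welschLoss hσ, mul_eq_zero_iff_left (by positivity),
    klFun_eq_zero_iff (div_nonneg hs hG.le), div_eq_one_iff_eq hG.ne']

/-- For fixed residuals `e : ι → ℝ`, the half-quadratic augmented cost over the
weights `s` is bounded below by the summed Welsch loss, with equality iff the
weights are the Gaussian-kernel weights `s i = G_σ(e i)`. -/
theorem hq_weights_optimal {ι : Type*} [Fintype ι] (σ : ℝ) (hσ : 0 < σ)
    (e : ι → ℝ) (s : ι → ℝ) (hs : ∀ i, 0 < s i) :
    (∑ i, σ ^ 2 * (1 - gaussKernel σ (e i))) ≤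
      ∑ i, ((e i) ^ 2 * (s i) / 2 + σ ^ 2 * ((s i) * Real.log (s i) - s i + 1)) ∧
    ((∑ i, ((e i) ^ 2 * (s i) / 2 + σ ^ 2 * ((s i) * Real.log (s i) - s i + 1)) =
        ∑ i, σ ^ 2 * (1 - gaussKernel σ (e i))) ↔
      ∀ i, s i = gaussKernel σ (e i)) := by
  have hle : ∀ i ∈ univ, welschLoss σ (e i) ≤ hqCost σ (e i) (s i) :=
    fun i _ => welschLoss_le_hqCost hσ.ne' (e i) (hs i).le
  refine ⟨sum_le_sum hle, ?_⟩
  change ∑ i, hqCost σ (e i) (s i) = ∑ i, welschLoss σ (e i) ↔ _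
  rw [eq_comm, sum_eq_sum_iff_of_le hle]
  simp only [mem_univ, true_implies, eq_comm (a := welschLoss _ _),
    hqCost_eq_welschLoss_iff hσ.ne' _ (hs _).le]
end

section
/- Let Y : Matrix (Fin r) (Fin n) ℂ be such that Y ⬝ Yᴴ is invertible, and let Z : Matrix (Fin m) (Fin n) ℂ. Then for every X : Matrix (Fin m) (Fin r) ℂ, ‖(Z ⬝ Yᴴ ⬝ (Y ⬝ Yᴴ)⁻¹) ⬝ Y − Z‖_F ≤ ‖X ⬝ Y − Z‖_F. That is, the least-squares update X⁺ = Z Yᴴ (Y Yᴴ)⁻¹ does not increase the factorization residual. -/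
open Finset Matrix

/-- Frobenius norm of a complex matrix. -/
noncomputable def frobNorm {m n : Type*} [Fintype m] [Fintype n]
    (A : Matrix m n ℂ) : ℝ :=
  Real.sqrt (∑ i, ∑ j, ‖A i j‖ ^ 2)

/-
Frobenius Pythagoras: the residual `R = X⁺ Y - Z` of the update satisfies the normal equations
`R Yᴴ = 0`, so it is orthogonal to every matrix of the form `W Y`. Since
`X Y - Z = R + (X - X⁺) Y`, this gives `‖X Y - Z‖² = ‖R‖² + ‖(X - X⁺) Y‖² ≥ ‖R‖²`.
-/

section Frobenius

variable {m n : Type*} [Fintype m] [Fintype n]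

lemma frobNorm_nonneg (A : Matrix m n ℂ) : 0 ≤ frobNorm A := Real.sqrt_nonneg _

lemma frobNorm_sq (A : Matrix m n ℂ) : frobNorm A ^ 2 = ∑ i, ∑ j, ‖A i j‖ ^ 2 :=
  Real.sq_sqrt (by positivity)

lemma frobNorm_add_sq_of_mul_conjTranspose_eq_zero {A B : Matrix m n ℂ} (h : A * Bᴴ = 0) :
    frobNorm (A + B) ^ 2 = frobNorm A ^ 2 + frobNorm B ^ 2 := by
  have hcross : ∑ i, ∑ j, (A i j * starRingEnd ℂ (B i j)).re = 0 := by
    have htrace : ∑ i, ∑ j, A i j * starRingEnd ℂ (B i j) = (A * Bᴴ).trace := by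
      simp [Matrix.trace, Matrix.mul_apply]
    simpa [Complex.re_sum, h] using congrArg Complex.re htrace
  simp only [frobNorm_sq, Matrix.add_apply, Complex.sq_norm, Complex.normSq_add,
    Finset.sum_add_distrib, ← Finset.mul_sum]
  rw [hcross]
  ring

lemma frobNorm_le_add_of_mul_conjTranspose_eq_zero {A B : Matrix m n ℂ} (h : A * Bᴴ = 0) :
    frobNorm A ≤ frobNorm (A + B) := by
  rw [← pow_le_pow_iff_left₀ (frobNorm_nonneg _) (frobNorm_nonneg _) two_ne_zero,
    frobNorm_add_sq_of_mul_conjTranspose_eq_zero h]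
  nlinarith [sq_nonneg (frobNorm B)]

end Frobenius

lemma inv_mul_sub_mul_eq_zero {l m n α : Type*} [Fintype m] [DecidableEq m] [Fintype n]
    [CommRing α] {Y : Matrix m n α} {B : Matrix n m α} (hYB : IsUnit (Y * B)) (Z : Matrix l n α) :
    (Z * B * (Y * B)⁻¹ * Y - Z) * B = 0 := by
  rw [Matrix.sub_mul, Matrix.mul_assoc _ Y, Matrix.mul_assoc (Z * B),
    Matrix.nonsing_inv_mul _ ((Matrix.isUnit_iff_isUnit_det _).mp hYB), Matrix.mul_one, sub_self]

/-- The least-squares update `X⁺ = Z Yᴴ (Y Yᴴ)⁻¹` does not increase the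
factorization residual. -/
theorem ls_update_X {m r n : ℕ} (Y : Matrix (Fin r) (Fin n) ℂ)
    (hY : IsUnit (Y * Yᴴ)) (Z : Matrix (Fin m) (Fin n) ℂ) :
    ∀ X : Matrix (Fin m) (Fin r) ℂ,
      frobNorm ((Z * Yᴴ * (Y * Yᴴ)⁻¹) * Y - Z) ≤ frobNorm (X * Y - Z) := by
  intro X
  set R := Z * Yᴴ * (Y * Yᴴ)⁻¹ * Y - Z
  have horth : R * ((X - Z * Yᴴ * (Y * Yᴴ)⁻¹) * Y)ᴴ = 0 := by
    rw [Matrix.conjTranspose_mul, ← Matrix.mul_assoc, inv_mul_sub_mul_eq_zero hY, Matrix.zero_mul]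
  calc frobNorm R ≤ frobNorm (R + (X - Z * Yᴴ * (Y * Yᴴ)⁻¹) * Y) :=
        frobNorm_le_add_of_mul_conjTranspose_eq_zero horth
    _ = frobNorm (X * Y - Z) := by
        congr 1
        simp only [R, Matrix.sub_mul]
        abel
end

section
/- Let n₁, n₂ ≥ 1 and n₃ ≥ 1, F : Matrix (ZMod n₃) (ZMod n₃) ℂ the DFT matrix F k l = exp(−2πi·(k.val·l.val)/n₃), and set F̃ = F ⊗ I_{n₁}. For any g : Matrix (ZMod n₃ × Fin n₁) (ZMod n₃ × Fin n₂) ℂ, let h = F̃ ⬝ g, let bdiagz(h) be the matrix with bdiagz(h) (k,i) (l,j) = if k = l then h (k,i) (l,j) else 0, and let g' = (1/n₃) • F̃ᴴ ⬝ bdiagz(h). Then the Frobenius inner product satisfies ⟨g, g'⟩_F = ‖g'‖_F², and both quantities equal (1/n₃)·‖bdiagz(F̃ ⬝ g)‖_F². -/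
/-!
The DFT entries are values of the standard additive character of `ZMod n₃`, so character
orthogonality gives `F̃ᴴ F̃ = n₃ • 1`, hence also `F̃ F̃ᴴ = n₃ • 1`. Writing `B = bdiagz(h)`,
adjointness gives `⟨g, F̃ᴴ B⟩ = ⟨F̃ g, B⟩ = ⟨h, B⟩`, and this is `‖B‖²` because every entry of `B`
is either `0` or the corresponding entry of `h`. Similarly `‖F̃ᴴ B‖² = ⟨B, F̃ F̃ᴴ B⟩ = n₃ ‖B‖²`,
so both `⟨g, g'⟩` and `‖g'‖²` equal `‖B‖² / n₃`.
-/

open Finset Matrix Kronecker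

/-- Squared Frobenius norm of a complex matrix. -/
noncomputable def frobSq {m n : Type*} [Fintype m] [Fintype n]
    (A : Matrix m n ℂ) : ℝ :=
  ∑ i, ∑ j, ‖A i j‖ ^ 2

/-- Frobenius inner product of complex matrices. -/
noncomputable def frobInner {m n : Type*} [Fintype m] [Fintype n]
    (A B : Matrix m n ℂ) : ℂ :=
  ∑ i, ∑ j, starRingEnd ℂ (A i j) * B i j

section DFT

variable {N : ℕ} [NeZero N]

lemma exp_neg_val_mul_val_eq_stdAddChar (k l : ZMod N) :
    Complex.exp (-(2 * (Real.pi : ℂ) * Complex.I * ((k.val : ℂ) * (l.val : ℂ))) / (N : ℂ)) =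
      ZMod.stdAddChar (-(k * l)) := by
  have hcast : ((-(k.val * l.val : ℤ) : ℤ) : ZMod N) = -(k * l) := by
    push_cast; simp
  rw [← hcast, ZMod.stdAddChar_coe]
  congr 1
  push_cast
  ring

lemma stdAddChar_sum_conj_mul (l l' : ZMod N) :
    ∑ k : ZMod N, starRingEnd ℂ (ZMod.stdAddChar (-(k * l))) * ZMod.stdAddChar (-(k * l')) =
      if l = l' then (N : ℂ) else 0 := by
  have hchar : 0 < ringChar (ZMod N) := by
    rw [ZMod.ringChar_zmod_n]; exact Nat.pos_of_neZero N
  have hterm : ∀ k : ZMod N, starRingEnd ℂ (ZMod.stdAddChar (-(k * l))) *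
      ZMod.stdAddChar (-(k * l')) = ZMod.stdAddChar (k * (l - l')) := by
    intro k
    rw [AddChar.starComp_apply hchar, AddChar.inv_apply, neg_neg, ← AddChar.map_add_eq_mul]
    ring_nf
  simp only [hterm, AddChar.sum_mulShift _ (ZMod.isPrimitive_stdAddChar N), sub_eq_zero,
    ZMod.card, Nat.cast_ite, Nat.cast_zero]

lemma conjTranspose_mul_self_of_dft (F : Matrix (ZMod N) (ZMod N) ℂ)
    (hF : ∀ k l, F k l = Complex.exp (-(2 * (Real.pi : ℂ) * Complex.I *
      ((k.val : ℂ) * (l.val : ℂ))) / (N : ℂ))) :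
    Fᴴ * F = (N : ℂ) • 1 := by
  ext l l'
  simp only [mul_apply, conjTranspose_apply, hF, exp_neg_val_mul_val_eq_stdAddChar,
    ← starRingEnd_apply, stdAddChar_sum_conj_mul, Matrix.smul_apply, one_apply, smul_eq_mul,
    mul_ite, mul_one, mul_zero]

end DFT

lemma kronecker_one_conjTranspose_mul_self {m n R : Type*} [Fintype m] [DecidableEq m]
    [Fintype n] [DecidableEq n] [CommSemiring R] [StarRing R] {A : Matrix m m R} {c : R}
    (hA : Aᴴ * A = c • 1) :
    (A ⊗ₖ (1 : Matrix n n R))ᴴ * (A ⊗ₖ (1 : Matrix n n R)) = c • 1 := by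
  rw [conjTranspose_kronecker, conjTranspose_one, ← mul_kronecker_mul, hA, Matrix.one_mul,
    smul_kronecker, one_kronecker_one]

lemma mul_eq_smul_one_comm {n K : Type*} [Fintype n] [DecidableEq n] [Field K]
    {A B : Matrix n n K} {c : K} (hc : c ≠ 0) (h : A * B = c • 1) : B * A = c • 1 := by
  have hinv : (c⁻¹ • A) * B = 1 := by
    rw [Matrix.smul_mul, h, smul_smul, inv_mul_cancel₀ hc, one_smul]
  calc B * A = c • (B * (c⁻¹ • A)) := by
        rw [Matrix.mul_smul, smul_smul, mul_inv_cancel₀ hc, one_smul]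
    _ = c • 1 := by rw [mul_eq_one_comm.mp hinv]

section Frobenius

variable {m n p : Type*} [Fintype m] [Fintype n] [Fintype p]

lemma frobInner_eq_trace (A B : Matrix m n ℂ) : frobInner A B = (Aᴴ * B).trace := by
  simp only [frobInner, trace, diag_apply, mul_apply, conjTranspose_apply, ← starRingEnd_apply]
  exact Finset.sum_comm

lemma frobInner_mul_left (U : Matrix p m ℂ) (A : Matrix m n ℂ) (B : Matrix p n ℂ) :
    frobInner (U * A) B = frobInner A (Uᴴ * B) := by
  rw [frobInner_eq_trace, frobInner_eq_trace, conjTranspose_mul, Matrix.mul_assoc]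

lemma frobInner_smul_left (c : ℂ) (A B : Matrix m n ℂ) :
    frobInner (c • A) B = starRingEnd ℂ c * frobInner A B := by
  simp only [frobInner, Matrix.smul_apply, smul_eq_mul, map_mul, Finset.mul_sum, mul_assoc]

lemma frobInner_smul_right (c : ℂ) (A B : Matrix m n ℂ) :
    frobInner A (c • B) = c * frobInner A B := by
  simp only [frobInner, Matrix.smul_apply, smul_eq_mul, Finset.mul_sum, mul_left_comm]

lemma frobInner_self (A : Matrix m n ℂ) : frobInner A A = (frobSq A : ℂ) := by
  simp only [frobInner, frobSq, Complex.conj_mul', Complex.ofReal_sum, Complex.ofReal_pow]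

lemma frobInner_eq_frobInner_self_of_zero_or_eq {A B : Matrix m n ℂ}
    (hB : ∀ i j, B i j = 0 ∨ B i j = A i j) : frobInner A B = frobInner B B := by
  refine Finset.sum_congr rfl fun i _ => Finset.sum_congr rfl fun j _ => ?_
  rcases hB i j with h | h <;> rw [h]
  simp

end Frobenius

theorem bdiagz_gradient_inner_general {n₁ n₂ n₃ : ℕ} [NeZero n₃]
    (F : Matrix (ZMod n₃) (ZMod n₃) ℂ)
    (hF : ∀ k l, F k l = Complex.exp (-(2 * (Real.pi : ℂ) * Complex.I *
      ((k.val : ℂ) * (l.val : ℂ))) / (n₃ : ℂ)))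
    (g : Matrix (ZMod n₃ × Fin n₁) (ZMod n₃ × Fin n₂) ℂ)
    (h : Matrix (ZMod n₃ × Fin n₁) (ZMod n₃ × Fin n₂) ℂ)
    (hh : h = (F ⊗ₖ (1 : Matrix (Fin n₁) (Fin n₁) ℂ)) * g)
    (bdiagzh : Matrix (ZMod n₃ × Fin n₁) (ZMod n₃ × Fin n₂) ℂ)
    (hbd : ∀ k i l j, bdiagzh (k, i) (l, j) = if k = l then h (k, i) (l, j) else 0)
    (g' : Matrix (ZMod n₃ × Fin n₁) (ZMod n₃ × Fin n₂) ℂ)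
    (hg' : g' = ((1 : ℂ) / (n₃ : ℂ)) •
      ((F ⊗ₖ (1 : Matrix (Fin n₁) (Fin n₁) ℂ))ᴴ * bdiagzh)) :
    frobInner g g' = (frobSq g' : ℂ) ∧
      frobSq g' = (1 / (n₃ : ℝ)) * frobSq bdiagzh := by
  have hn : (n₃ : ℂ) ≠ 0 := NeZero.ne _
  have hunitary : (F ⊗ₖ (1 : Matrix (Fin n₁) (Fin n₁) ℂ)) *
      (F ⊗ₖ (1 : Matrix (Fin n₁) (Fin n₁) ℂ))ᴴ = (n₃ : ℂ) • 1 :=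
    mul_eq_smul_one_comm hn
      (kronecker_one_conjTranspose_mul_self (conjTranspose_mul_self_of_dft F hF))
  have hmask : frobInner h bdiagzh = frobInner bdiagzh bdiagzh :=
    frobInner_eq_frobInner_self_of_zero_or_eq fun ⟨k, i⟩ ⟨l, j⟩ => by
      rw [hbd]; split_ifs <;> simp
  have hinner : frobInner g g' = 1 / n₃ * frobInner bdiagzh bdiagzh := by
    rw [hg', frobInner_smul_right, ← frobInner_mul_left, ← hh, hmask]
  have hnorm : frobInner g' g' = 1 / n₃ * frobInner bdiagzh bdiagzh := by
    rw [hg', frobInner_smul_left, frobInner_smul_right, frobInner_mul_left,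
      conjTranspose_conjTranspose, ← Matrix.mul_assoc, hunitary, Matrix.smul_mul,
      Matrix.one_mul, frobInner_smul_right, map_div₀, map_one, map_natCast]
    field_simp
  rw [frobInner_self, frobInner_self] at hnorm
  rw [frobInner_self] at hinner
  exact ⟨hinner.trans hnorm.symm, Complex.ofReal_injective (by push_cast; exact hnorm)⟩

/-- Projecting the gradient onto the block-diagonal structure through the DFT:
`⟨g, g'⟩_F = ‖g'‖_F² = (1/n₃)·‖bdiagz(F̃ ⬝ g)‖_F²`. -/
theorem bdiagz_gradient_inner {n₁ n₂ n₃ : ℕ}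
    (hn₁ : 1 ≤ n₁) (hn₂ : 1 ≤ n₂) [NeZero n₃]
    (F : Matrix (ZMod n₃) (ZMod n₃) ℂ)
    (hF : ∀ k l, F k l = Complex.exp (-(2 * (Real.pi : ℂ) * Complex.I *
      ((k.val : ℂ) * (l.val : ℂ))) / (n₃ : ℂ)))
    (g : Matrix (ZMod n₃ × Fin n₁) (ZMod n₃ × Fin n₂) ℂ)
    (h : Matrix (ZMod n₃ × Fin n₁) (ZMod n₃ × Fin n₂) ℂ)
    (hh : h = (F ⊗ₖ (1 : Matrix (Fin n₁) (Fin n₁) ℂ)) * g)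
    (bdiagzh : Matrix (ZMod n₃ × Fin n₁) (ZMod n₃ × Fin n₂) ℂ)
    (hbd : ∀ k i l j, bdiagzh (k, i) (l, j) = if k = l then h (k, i) (l, j) else 0)
    (g' : Matrix (ZMod n₃ × Fin n₁) (ZMod n₃ × Fin n₂) ℂ)
    (hg' : g' = ((1 : ℂ) / (n₃ : ℂ)) •
      ((F ⊗ₖ (1 : Matrix (Fin n₁) (Fin n₁) ℂ))ᴴ * bdiagzh)) :
    frobInner g g' = (frobSq g' : ℂ) ∧
      frobSq g' = (1 / (n₃ : ℝ)) * frobSq bdiagzh :=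
  bdiagz_gradient_inner_general F hF g h hh bdiagzh hbd g' hg'
end
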